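/- arXiv:0801.4967 — 7 statements merged into one kernel-verified Lean document; each statement's English description precedes it below -/
import Mathlib

section
/- Let Y be a first-countable locally path-connected space and f : Y → X a function to a topological space X. If f ∘ g is continuous for every path g : [0,1] → Y, then f is continuous. -/
/-!
Continuity is tested on closures: given `y ∈ closure s`, local path-connectedness yields loops
at `y` inside the members of a countable neighbourhood basis, each passing through a point of
`s`. Since these loops shrink to `y`, traversing the `n`-th one on `[1 / (n + 1), 1 / n]` is a
single loop at `y` whose parameters landing in `s` accumulate at `0`; continuity of `f` along it
puts `f y` in `closure (f '' s)`.
-/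

open Filter Set Topology unitInterval

section

variable {Y : Type*} [TopologicalSpace Y] {s : Set Y} {y : Y}

namespace Path

noncomputable def chainLoops (p : ℕ → Path y y) (u : ℝ) : Y :=
  (p ⌊u⌋₊).extend (u - ⌊u⌋₊)

variable (p : ℕ → Path y y)

theorem chainLoops_of_nonpos {u : ℝ} (hu : u ≤ 0) : chainLoops p u = y := by
  rw [chainLoops, Nat.floor_of_nonpos hu, Nat.cast_zero, sub_zero, extend_of_le_zero _ hu]

theorem chainLoops_natCast_add (n : ℕ) (a : I) : chainLoops p (n + a) = p n a := by
  rcases a.2.2.lt_or_eq with ha | ha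
  · rw [chainLoops, Nat.floor_eq_iff (by linarith [a.2.1]) |>.2 ⟨by linarith [a.2.1], by linarith⟩,
      add_sub_cancel_left, extend_extends']
  · rw [chainLoops, ha, ← Nat.cast_add_one, Nat.floor_natCast, sub_self, extend_zero,
      show a = 1 from Subtype.ext ha, Path.target]

theorem continuousOn_chainLoops_Icc_intCast (n : ℤ) :
    ContinuousOn (chainLoops p) (Icc n (n + 1)) := by
  cases n with
  | ofNat n =>
    refine ((p n).continuous_extend.comp (continuous_sub_right (n : ℝ))).continuousOn.congr
      fun u hu => ?_
    have ha : u - n ∈ I := by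
      simp only [Int.ofNat_eq_natCast, Int.cast_natCast, mem_Icc] at hu
      constructor <;> linarith [hu.1, hu.2]
    rw [Function.comp_apply, show u - n = ((⟨u - n, ha⟩ : I) : ℝ) from rfl, extend_extends',
      ← chainLoops_natCast_add, add_sub_cancel]
  | negSucc n =>
    refine continuousOn_const.congr fun u hu => chainLoops_of_nonpos p ?_
    have := hu.2
    push_cast at this
    linarith

theorem continuous_chainLoops : Continuous (chainLoops p) :=
  (locallyFinite_Icc_of_tendsto tendsto_intCast_atTop_atTop
      (tendsto_atBot_add_const_right _ 1 (tendsto_intCast_atBot_iff.2 tendsto_id))).continuous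
    (iUnion_Icc_intCast ℝ) (fun _ => isClosed_Icc) (continuousOn_chainLoops_Icc_intCast p)

variable {p}

theorem tendsto_chainLoops_cobounded
    (hp : Tendsto (fun n => range (p n)) atTop (𝓝 y).smallSets) :
    Tendsto (chainLoops p) (Bornology.cobounded ℝ) (𝓝 y) := by
  rw [IsOrderBornology.cobounded_eq, tendsto_sup]
  refine ⟨tendsto_const_nhds.congr' ?_, (hp.comp tendsto_nat_floor_atTop).of_smallSets ?_⟩
  · filter_upwards [eventually_le_atBot 0] with u hu
    exact (chainLoops_of_nonpos p hu).symm
  · refine Eventually.of_forall fun u => ?_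
    rw [Function.comp_apply, ← extend_range]
    exact mem_range_self _

theorem continuous_chainLoops_inv
    (hp : Tendsto (fun n => range (p n)) atTop (𝓝 y).smallSets) :
    Continuous fun t : ℝ => chainLoops p t⁻¹ := by
  refine continuous_iff_continuousAt.2 fun t => ?_
  rcases eq_or_ne t 0 with rfl | ht
  · rw [continuousAt_iff_punctured_nhds, inv_zero, chainLoops_of_nonpos p le_rfl]
    exact (tendsto_chainLoops_cobounded hp).comp tendsto_inv₀_nhdsNE_zero
  · exact (continuous_chainLoops p).continuousAt.comp (continuousAt_inv₀ ht)

/-- At `0` this relies on the convention `0⁻¹ = 0`. -/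
noncomputable def infiniteConcat (p : ℕ → Path y y)
    (hp : Tendsto (fun n => range (p n)) atTop (𝓝 y).smallSets) : Path y y where
  toFun t := chainLoops p (t : ℝ)⁻¹
  continuous_toFun := (continuous_chainLoops_inv hp).comp continuous_subtype_val
  source' := by simp [chainLoops_of_nonpos]
  target' := by simpa using chainLoops_natCast_add p 1 0

theorem zero_mem_closure_preimage_infiniteConcat
    (hp : Tendsto (fun n => range (p n)) atTop (𝓝 y).smallSets)
    (hs : ∀ n, ∃ a, p n a ∈ s) : (0 : I) ∈ closure (infiniteConcat p hp ⁻¹' s) := by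
  choose a ha using hs
  have hge (n : ℕ) : (n + 1 : ℝ) ≤ (n + 1 : ℕ) + a (n + 1) := by
    push_cast; linarith [(a (n + 1)).2.1]
  let t (n : ℕ) : I := ⟨((n + 1 : ℕ) + a (n + 1) : ℝ)⁻¹,
    inv_nonneg.2 (by linarith [hge n]), inv_le_one_of_one_le₀ (by linarith [hge n])⟩
  refine mem_closure_of_tendsto (f := t) (b := atTop) ?_ (Eventually.of_forall fun n => ?_)
  · refine tendsto_subtype_rng.2 (tendsto_inv_atTop_zero.comp ?_)
    exact tendsto_atTop_mono hge (tendsto_atTop_add_const_right _ 1 tendsto_natCast_atTop_atTop)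
  · change chainLoops p (t n : ℝ)⁻¹ ∈ s
    rw [inv_inv, chainLoops_natCast_add]
    exact ha _

end Path

theorem exists_loop_range_subset_of_mem_closure [LocallyPathConnectedSpace Y] {U : Set Y}
    (hU : U ∈ 𝓝 y) (hy : y ∈ closure s) :
    ∃ γ : Path y y, range γ ⊆ U ∧ ∃ a, γ a ∈ s := by
  obtain ⟨V, ⟨hV, hVconn⟩, hVU⟩ := (path_connected_basis y).mem_iff.1 hU
  obtain ⟨z, hzV, hzs⟩ := mem_closure_iff_nhds.1 hy V hV
  obtain ⟨δ, hδ⟩ := hVconn.joinedIn y (mem_of_mem_nhds hV) z hzV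
  obtain ⟨a, ha⟩ : z ∈ range (δ.trans δ.symm) := by
    rw [Path.trans_range]
    exact Or.inl ⟨1, δ.target⟩
  refine ⟨δ.trans δ.symm, ?_, a, by rwa [ha]⟩
  rw [Path.trans_range, Path.symm_range, union_self]
  exact range_subset_iff.2 fun t => hVU (hδ t)

theorem exists_loops_tendsto_smallSets_of_mem_closure [FirstCountableTopology Y]
    [LocallyPathConnectedSpace Y] (hy : y ∈ closure s) :
    ∃ p : ℕ → Path y y, Tendsto (fun n => range (p n)) atTop (𝓝 y).smallSets ∧
      ∀ n, ∃ a, p n a ∈ s := by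
  obtain ⟨B, hB⟩ := (𝓝 y).exists_antitone_basis
  choose p hpB hps using fun n => exists_loop_range_subset_of_mem_closure (hB.mem n) hy
  exact ⟨p, hB.tendsto_smallSets.smallSets_mono (Eventually.of_forall hpB), hps⟩

theorem exists_loop_zero_mem_closure_preimage [FirstCountableTopology Y]
    [LocallyPathConnectedSpace Y] (hy : y ∈ closure s) :
    ∃ γ : Path y y, (0 : I) ∈ closure (γ ⁻¹' s) :=
  let ⟨_, hp, hps⟩ := exists_loops_tendsto_smallSets_of_mem_closure hy
  ⟨_, Path.zero_mem_closure_preimage_infiniteConcat hp hps⟩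

end

/-- Let `Y` be a first-countable locally path-connected space and
`f : Y → X` a function to a topological space `X`. If `f ∘ g` is continuous for every
path `g : [0,1] → Y`, then `f` is continuous. -/
theorem continuous_of_continuous_comp_paths {X Y : Type*} [TopologicalSpace X]
    [TopologicalSpace Y] [FirstCountableTopology Y]
    [LocallyPathConnectedSpace Y] (f : Y → X)
    (h : ∀ g : C(unitInterval, Y), Continuous (f ∘ g)) :
    Continuous f := by
  refine continuous_iff_image_closure_subset_closure_image.2 fun s => ?_
  rintro _ ⟨y, hy, rfl⟩
  obtain ⟨γ, hγ⟩ := exists_loop_zero_mem_closure_preimage hy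
  have hfγ := mem_closure_image (h γ).continuousAt hγ
  rw [Function.comp_apply, ContinuousMap.coe_coe, γ.source, image_comp] at hfγ
  exact closure_mono (image_mono (image_preimage_subset γ s)) hfγ
end

section
/- Let X be a path-connected topological space and 𝒫 a class of path-connected locally path-connected spaces. The family 𝒯 of subsets U of X such that f⁻¹(U) is open in Z for every Z ∈ 𝒫 and every continuous map f : Z → X is a topology on X, and X equipped with 𝒯 is locally path-connected. -/
/-! The topology `𝒯` is `TopologicalSpace.generatedBy Z`: it is coinduced by the single map
`⟨⟨i, f⟩, z⟩ ↦ f z` out of `Σ (i, f : C(Z i, X)), Z i`, and a topology coinduced from a locally path-connected space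
(here a disjoint union of Peano spaces) is locally path-connected. -/

open Topology

namespace TopologicalSpace

variable {ι : Type*} {Z : ι → Type*} [∀ i, TopologicalSpace (Z i)] {X : Type*} [TopologicalSpace X]

theorem isOpen_generatedBy_iff {U : Set X} :
    IsOpen[generatedBy Z] U ↔ ∀ (i : ι) (f : Z i → X), Continuous f → IsOpen (f ⁻¹' U) := by
  simp only [isOpen_iSup_iff, isOpen_coinduced]
  exact ⟨fun h i f hf ↦ h i ⟨f, hf⟩, fun h i f ↦ h i f f.continuous⟩

theorem continuous_generatedBy_iff {i : ι} {f : Z i → X} :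
    Continuous[_, generatedBy Z] f ↔ Continuous f :=
  ⟨continuous_le_rng generatedBy_le,
    fun hf ↦ continuous_iff_coinduced_le.2 <| le_iSup₂_of_le i ⟨f, hf⟩ le_rfl⟩

theorem locallyPathConnectedSpace_generatedBy [∀ i, LocallyPathConnectedSpace (Z i)] :
    @LocallyPathConnectedSpace X (generatedBy Z) := by
  rw [generatedBy_eq_coinduced]
  exact LocallyPathConnectedSpace.coinduced _

end TopologicalSpace

open TopologicalSpace in
theorem exists_topology_of_class_of_peano_spaces_general {X : Type*} [TopologicalSpace X]
    {ι : Type*} (Z : ι → Type*) [∀ i, TopologicalSpace (Z i)]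
    [∀ i, LocallyPathConnectedSpace (Z i)] :
    ∃ T : TopologicalSpace X,
      (∀ U : Set X, T.IsOpen U ↔ ∀ (i : ι) (f : Z i → X), Continuous f → IsOpen (f ⁻¹' U)) ∧
      @LocallyPathConnectedSpace X T := by
  refine ⟨generatedBy Z, fun U ↦ ?_, locallyPathConnectedSpace_generatedBy⟩
  -- `Continuous f` here is continuity for the bound topology `T`, which for `generatedBy Z`
  -- agrees with continuity for the original topology.
  simp only [continuous_generatedBy_iff]
  exact isOpen_generatedBy_iff

/-- Let `X` be a path-connected space and `𝒫` a class of path-connected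
locally path-connected (Peano) spaces, given as an indexed family `Z i`. The family `𝒯`
of subsets `U` of `X` such that `f ⁻¹' U` is open for every continuous `f : Z i → X`
is a topology on `X`, and `X` equipped with `𝒯` is locally path-connected. -/
theorem exists_topology_of_class_of_peano_spaces {X : Type*} [TopologicalSpace X]
    [PathConnectedSpace X] {ι : Type*} (Z : ι → Type*) [∀ i, TopologicalSpace (Z i)]
    [∀ i, PathConnectedSpace (Z i)] [∀ i, LocallyPathConnectedSpace (Z i)] :
    ∃ T : TopologicalSpace X,
      (∀ U : Set X, T.IsOpen U ↔ ∀ (i : ι) (f : Z i → X), Continuous f → IsOpen (f ⁻¹' U)) ∧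
      @LocallyPathConnectedSpace X T :=
  exists_topology_of_class_of_peano_spaces_general Z
end

section
/- If f : X → Y is a Peano covering map and U is an open subset of Y, then the restriction f : f⁻¹(U) → U is a Peano covering map. -/
/-- A continuous map `f : X → Y` is a Peano map if the path components of preimages of
open sets of `Y` form a basis of the topology of `X`. -/
def IsPeanoMap {X Y : Type*} [TopologicalSpace X] [TopologicalSpace Y] (f : X → Y) : Prop :=
  Continuous f ∧ TopologicalSpace.IsTopologicalBasis
    {S : Set X | ∃ (U : Set Y) (x : X), IsOpen U ∧ x ∈ f ⁻¹' U ∧ S = pathComponentIn (f ⁻¹' U) x}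

/-- `f` is a Serre fibration: homotopy lifting property with respect to all cubes `Iⁿ`. -/
def IsSerreFibration {X Y : Type*} [TopologicalSpace X] [TopologicalSpace Y] (f : X → Y) : Prop :=
  ∀ (n : ℕ) (H : C((Fin n → unitInterval) × unitInterval, Y)) (g : C(Fin n → unitInterval, X)),
    (∀ z, f (g z) = H (z, 0)) →
    ∃ G : C((Fin n → unitInterval) × unitInterval, X),
      (∀ p, f (G p) = H p) ∧ ∀ z, G (z, 0) = g z

/-- Every path component of every fiber of `f` is a single point. -/
def HasTrivialFiberPathComponents {X Y : Type*} [TopologicalSpace X] [TopologicalSpace Y]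
    (f : X → Y) : Prop :=
  ∀ (y : Y) (a b : X), JoinedIn (f ⁻¹' {y}) a b → a = b

/-- A Peano covering map: a Peano map which is a Serre fibration and whose fibers have
trivial path components. -/
def IsPeanoCoveringMap {X Y : Type*} [TopologicalSpace X] [TopologicalSpace Y]
    (f : X → Y) : Prop :=
  IsPeanoMap f ∧ IsSerreFibration f ∧ HasTrivialFiberPathComponents f

/-!
The three defining properties pass to `U.restrictPreimage f` separately. A lift along `f` of a
homotopy into `U` lies in `f⁻¹(U)`, and fibres of the restriction are fibres of `f`. For the Peano
property (where `U` must be open), the path component of a point in `f⁻¹(V ∩ U)` is a basic open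
set of `X` inside `f⁻¹(U)` and the image of the corresponding path component for the restriction;
replacing `V` by `V ∩ U` only shrinks path components, so these sets still form a basis.
-/

open Set TopologicalSpace

section Subtype

variable {X : Type*} [TopologicalSpace X] {s t : Set X}

theorem joinedIn_preimage_val_iff (a b : s) :
    JoinedIn (Subtype.val ⁻¹' t : Set s) a b ↔ JoinedIn (t ∩ s) (a : X) b := by
  constructor
  · intro h
    exact (h.map continuous_subtype_val).mono <| by
      rintro _ ⟨y, hy, rfl⟩
      exact ⟨hy, y.2⟩
  · rintro ⟨γ, hγ⟩
    exact ⟨⟨⟨fun u => ⟨γ u, (hγ u).2⟩, γ.continuous.subtype_mk _⟩,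
      Subtype.ext γ.source, Subtype.ext γ.target⟩, fun u => (hγ u).1⟩

theorem pathComponentIn_preimage_val (a : s) :
    pathComponentIn (Subtype.val ⁻¹' t : Set s) a
      = Subtype.val ⁻¹' pathComponentIn (t ∩ s) (a : X) :=
  ext fun b => joinedIn_preimage_val_iff a b

end Subtype

section RestrictPreimage

variable {X Y : Type*} [TopologicalSpace X] {f : X → Y} {U : Set Y}

theorem pathComponentIn_restrictPreimage_preimage_val (W : Set Y) (x : f ⁻¹' U) :
    pathComponentIn (U.restrictPreimage f ⁻¹' (Subtype.val ⁻¹' W)) x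
      = Subtype.val ⁻¹' pathComponentIn (f ⁻¹' (W ∩ U)) (x : X) :=
  pathComponentIn_preimage_val (t := f ⁻¹' W) x

variable [TopologicalSpace Y]

theorem IsPeanoMap.restrictPreimage (hf : IsPeanoMap f) (hU : IsOpen U) :
    IsPeanoMap (U.restrictPreimage f) := by
  obtain ⟨hcont, hbasis⟩ := hf
  refine ⟨hcont.restrictPreimage, isTopologicalBasis_of_isOpen_of_nhds ?_ ?_⟩
  · rintro _ ⟨V, x, hV, hxV, rfl⟩
    obtain ⟨W, hW, rfl⟩ := isOpen_induced_iff.mp hV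
    rw [pathComponentIn_restrictPreimage_preimage_val]
    exact (hbasis.isOpen ⟨W ∩ U, x, hW.inter hU, ⟨hxV, x.2⟩, rfl⟩).preimage continuous_subtype_val
  · intro x _ hxO hOpen
    obtain ⟨O, hO, rfl⟩ := isOpen_induced_iff.mp hOpen
    obtain ⟨_, ⟨V, x₀, hV, -, rfl⟩, hxS, hSO⟩ := hbasis.exists_subset_of_mem_open
      (show (x : X) ∈ O ∩ f ⁻¹' U from ⟨hxO, x.2⟩) (hO.inter (hU.preimage hcont))
    have hxV : (x : X) ∈ f ⁻¹' V := pathComponentIn_subset hxS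
    refine ⟨_, ⟨Subtype.val ⁻¹' V, x, isOpen_induced hV, hxV, rfl⟩,
      mem_pathComponentIn_self hxV, ?_⟩
    have hsub : pathComponentIn (f ⁻¹' (V ∩ U)) x ⊆ pathComponentIn (f ⁻¹' V) x₀ :=
      pathComponentIn_congr hxS ▸ pathComponentIn_mono (preimage_mono inter_subset_left)
    rw [pathComponentIn_restrictPreimage_preimage_val]
    exact fun b hb => (hSO (hsub hb)).1

theorem IsSerreFibration.restrictPreimage (hf : IsSerreFibration f) (U : Set Y) :
    IsSerreFibration (U.restrictPreimage f) := by
  intro n H g hg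
  obtain ⟨G, hGH, hG0⟩ := hf n (.comp ⟨Subtype.val, continuous_subtype_val⟩ H)
    (.comp ⟨Subtype.val, continuous_subtype_val⟩ g) fun z => congrArg Subtype.val (hg z)
  have hGU : ∀ p, G p ∈ f ⁻¹' U := fun p => by
    rw [mem_preimage, hGH p]
    exact (H p).2
  exact ⟨⟨fun p => ⟨G p, hGU p⟩, G.continuous.subtype_mk hGU⟩,
    fun p => Subtype.ext (hGH p), fun z => Subtype.ext (hG0 z)⟩

theorem HasTrivialFiberPathComponents.restrictPreimage (hf : HasTrivialFiberPathComponents f)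
    (U : Set Y) : HasTrivialFiberPathComponents (U.restrictPreimage f) :=
  fun y a b hab => Subtype.ext <| hf y a b <| (hab.map continuous_subtype_val).mono <|
    image_subset_iff.mpr fun _ hz => congrArg Subtype.val hz

end RestrictPreimage

/-- If `f : X → Y` is a Peano covering map and `U ⊆ Y` is open, then the
restriction `f : f⁻¹(U) → U` is a Peano covering map. -/
theorem isPeanoCoveringMap_restrict {X Y : Type*} [TopologicalSpace X]
    [TopologicalSpace Y] (f : X → Y) (hf : IsPeanoCoveringMap f) (U : Set Y)
    (hU : IsOpen U) :
    IsPeanoCoveringMap (fun x : (f ⁻¹' U) => (⟨f x, x.2⟩ : U)) :=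
  ⟨hf.1.restrictPreimage hU, hf.2.1.restrictPreimage U, hf.2.2.restrictPreimage U⟩
end

section
/- A path-connected topological space X has discrete fundamental group π₁(X,x₀) in the topology whose basic neighborhoods of a class [α] are the sets B([α], 𝒰) = {[α·λ] : λ ∈ π(𝒰,x₀)} indexed by open covers 𝒰 of X, if and only if X is semilocally simply connected. -/
/-- The class of a loop in the fundamental group. -/
noncomputable def loopCls {X : Type*} [TopologicalSpace X] {x : X} (γ : Path x x) :
    FundamentalGroup X x :=
  FundamentalGroup.fromPath (⟦γ⟧ : Path.Homotopic.Quotient x x)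

/-- `𝒰` is an open cover of `X`. -/
def IsOpenCover {X : Type*} [TopologicalSpace X] (𝒰 : Set (Set X)) : Prop :=
  (∀ U ∈ 𝒰, IsOpen U) ∧ ⋃₀ 𝒰 = Set.univ

/-- The Spanier subgroup `π(𝒰,x₀)` of `π₁(X,x₀)`: the subgroup generated by all classes
`[α * γ * α⁻¹]` where `γ` is a loop contained in some member of `𝒰` and `α` is a path
from `x₀` to `γ(0)`. -/
noncomputable def spanierGroup {X : Type*} [TopologicalSpace X] (𝒰 : Set (Set X))
    (x₀ : X) : Subgroup (FundamentalGroup X x₀) :=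
  Subgroup.closure {g | ∃ (x : X) (α : Path x₀ x) (γ : Path x x) (U : Set X),
    U ∈ 𝒰 ∧ Set.range γ ⊆ U ∧ g = loopCls ((α.trans γ).trans α.symm)}

/-- The topology on `π₁(X,x₀)` whose basic neighborhoods of `g` are the cosets
`g·π(𝒰,x₀)`, indexed by open covers `𝒰` of `X`. -/
noncomputable def piOneTopology (X : Type*) [TopologicalSpace X] (x₀ : X) :
    TopologicalSpace (FundamentalGroup X x₀) :=
  TopologicalSpace.generateFrom
    {S | ∃ (g : FundamentalGroup X x₀) (𝒰 : Set (Set X)), IsOpenCover 𝒰 ∧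
      S = {h | g⁻¹ * h ∈ spanierGroup 𝒰 x₀}}

/-- `X` is semilocally simply connected: every point has a neighborhood `U` such that
every loop in `U` is null-homotopic in `X`. -/
def IsSemilocallySimplyConnected (X : Type*) [TopologicalSpace X] : Prop :=
  ∀ x : X, ∃ U : Set X, IsOpen U ∧ x ∈ U ∧
    ∀ y ∈ U, ∀ γ : Path y y, Set.range γ ⊆ U →
      (⟦γ⟧ : Path.Homotopic.Quotient y y) = ⟦Path.refl y⟧

/-!
The cosets `g·π(𝒰,x₀)` form a basis of the topology, because two open covers are refined
by their pairwise intersections. Hence `π₁(X,x₀)` is discrete iff `{1}` is open iff some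
open cover has trivial Spanier group. Conjugating by paths from `x₀` (which exist by
path-connectedness), `π(𝒰,x₀)` is trivial iff every loop lying in a member of `𝒰` is
null-homotopic in `X`, and an open cover by such sets exists iff `X` is semilocally
simply connected.
-/

lemma setOf_inv_mul_mem_subset {G : Type*} [Group G] {H K : Subgroup G} (hHK : H ≤ K)
    {g x : G} (hx : g⁻¹ * x ∈ K) : {h | x⁻¹ * h ∈ H} ⊆ {h | g⁻¹ * h ∈ K} :=
  fun h hh => by
    simpa only [Set.mem_ofPred_eq, mul_assoc, mul_inv_cancel_left] using K.mul_mem hx (hHK hh)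

section

variable {X : Type*} [TopologicalSpace X]

lemma loopCls_trans_trans_symm {x₀ x : X} (α : Path x₀ x) (γ : Path x x) :
    loopCls ((α.trans γ).trans α.symm) =
      FundamentalGroup.fundamentalGroupMulEquivOfPath α.symm (loopCls γ) := by
  -- the conjugating iso has inverse `⟦α.symm.symm⟧`, which is `⟦α⟧` only up to `Path.symm_symm`
  show _ = Path.Homotopic.Quotient.trans ⟦α.symm.symm⟧ (.trans ⟦γ⟧ ⟦α.symm⟧)
  rw [Path.symm_symm]
  exact Path.Homotopic.Quotient.trans_assoc ⟦α⟧ ⟦γ⟧ ⟦α.symm⟧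

lemma loopCls_trans_trans_symm_eq_one_iff {x₀ x : X} (α : Path x₀ x) (γ : Path x x) :
    loopCls ((α.trans γ).trans α.symm) = 1 ↔
      (⟦γ⟧ : Path.Homotopic.Quotient x x) = ⟦Path.refl x⟧ := by
  rw [loopCls_trans_trans_symm, MulEquiv.map_eq_one_iff]
  rfl

lemma IsOpenCover.exists_mem {𝒰 : Set (Set X)} (h𝒰 : IsOpenCover 𝒰) (x : X) :
    ∃ U ∈ 𝒰, x ∈ U :=
  Set.mem_sUnion.mp (h𝒰.2.symm ▸ Set.mem_univ x)

def HasTrivialLoops (U : Set X) : Prop :=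
  ∀ y ∈ U, ∀ γ : Path y y, Set.range γ ⊆ U →
    (⟦γ⟧ : Path.Homotopic.Quotient y y) = ⟦Path.refl y⟧

lemma isSemilocallySimplyConnected_iff_exists_isOpenCover :
    IsSemilocallySimplyConnected X ↔
      ∃ 𝒰 : Set (Set X), IsOpenCover 𝒰 ∧ ∀ U ∈ 𝒰, HasTrivialLoops U := by
  refine ⟨fun h => ⟨{U | IsOpen U ∧ HasTrivialLoops U}, ⟨fun U hU => hU.1, ?_⟩,
    fun U hU => hU.2⟩, fun ⟨𝒰, h𝒰, hloops⟩ x => ?_⟩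
  · refine Set.eq_univ_of_forall fun x => ?_
    obtain ⟨U, hUo, hxU, hU⟩ := h x
    exact ⟨U, ⟨hUo, hU⟩, hxU⟩
  · obtain ⟨U, hU, hxU⟩ := h𝒰.exists_mem x
    exact ⟨U, h𝒰.1 U hU, hxU, hloops U hU⟩

lemma IsOpenCover.image2_inter {𝒰 𝒱 : Set (Set X)} (h𝒰 : IsOpenCover 𝒰)
    (h𝒱 : IsOpenCover 𝒱) :
    IsOpenCover (Set.image2 (· ∩ ·) 𝒰 𝒱) := by
  refine ⟨?_, Set.eq_univ_of_forall fun x => ?_⟩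
  · rintro _ ⟨U, hU, V, hV, rfl⟩
    exact (h𝒰.1 U hU).inter (h𝒱.1 V hV)
  · obtain ⟨U, hU, hxU⟩ := h𝒰.exists_mem x
    obtain ⟨V, hV, hxV⟩ := h𝒱.exists_mem x
    exact ⟨U ∩ V, Set.mem_image2_of_mem hU hV, hxU, hxV⟩

lemma spanierGroup_mono {𝒰 𝒱 : Set (Set X)} (h : ∀ V ∈ 𝒱, ∃ U ∈ 𝒰, V ⊆ U) (x₀ : X) :
    spanierGroup 𝒱 x₀ ≤ spanierGroup 𝒰 x₀ := by
  refine Subgroup.closure_mono ?_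
  rintro g ⟨x, α, γ, V, hV, hγ, rfl⟩
  obtain ⟨U, hU, hVU⟩ := h V hV
  exact ⟨x, α, γ, U, hU, hγ.trans hVU, rfl⟩

lemma spanierGroup_eq_bot_iff [PathConnectedSpace X] (𝒰 : Set (Set X)) (x₀ : X) :
    spanierGroup 𝒰 x₀ = ⊥ ↔ ∀ U ∈ 𝒰, HasTrivialLoops U := by
  rw [spanierGroup, Subgroup.closure_eq_bot_iff]
  constructor
  · intro h U hU y _ γ hγ
    obtain ⟨α⟩ := PathConnectedSpace.joined x₀ y
    exact (loopCls_trans_trans_symm_eq_one_iff α γ).mp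
      (h ⟨y, α, γ, U, hU, hγ, rfl⟩)
  · rintro h g ⟨x, α, γ, U, hU, hγ, rfl⟩
    exact (loopCls_trans_trans_symm_eq_one_iff α γ).mpr
      (h U hU x (hγ ⟨0, γ.source⟩) γ hγ)

def spanierCosets (x₀ : X) : Set (Set (FundamentalGroup X x₀)) :=
  {S | ∃ (g : FundamentalGroup X x₀) (𝒰 : Set (Set X)), IsOpenCover 𝒰 ∧
      S = {h | g⁻¹ * h ∈ spanierGroup 𝒰 x₀}}

lemma isTopologicalBasis_spanierCosets (x₀ : X) :
    @TopologicalSpace.IsTopologicalBasis _ (piOneTopology X x₀) (spanierCosets x₀) := by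
  let := piOneTopology X x₀
  have self_mem (g : FundamentalGroup X x₀) (𝒰 : Set (Set X)) :
      g ∈ {h | g⁻¹ * h ∈ spanierGroup 𝒰 x₀} := by
    rw [Set.mem_ofPred_eq, inv_mul_cancel]
    exact one_mem _
  refine ⟨?_, Set.eq_univ_of_forall fun g => ?_, rfl⟩
  · rintro _ ⟨g₁, 𝒰, h𝒰, rfl⟩ _ ⟨g₂, 𝒱, h𝒱, rfl⟩ g ⟨hg₁, hg₂⟩
    refine ⟨_, ⟨g, _, h𝒰.image2_inter h𝒱, rfl⟩, self_mem _ _, Set.subset_inter ?_ ?_⟩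
    · refine setOf_inv_mul_mem_subset (spanierGroup_mono ?_ x₀) hg₁
      rintro _ ⟨U, hU, V, -, rfl⟩
      exact ⟨U, hU, Set.inter_subset_left⟩
    · refine setOf_inv_mul_mem_subset (spanierGroup_mono ?_ x₀) hg₂
      rintro _ ⟨U, -, V, hV, rfl⟩
      exact ⟨V, hV, Set.inter_subset_right⟩
  · exact ⟨_, ⟨g, {Set.univ}, ⟨by simp, by simp⟩, rfl⟩, self_mem _ _⟩

lemma discreteTopology_piOneTopology_iff (x₀ : X) :
    @DiscreteTopology _ (piOneTopology X x₀) ↔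
      ∃ 𝒰 : Set (Set X), IsOpenCover 𝒰 ∧ spanierGroup 𝒰 x₀ = ⊥ := by
  let := piOneTopology X x₀
  rw [discreteTopology_iff_isOpen_singleton]
  constructor
  · intro h
    obtain ⟨_, ⟨g, 𝒰, h𝒰, rfl⟩, hg, hsub⟩ :=
      (isTopologicalBasis_spanierCosets x₀).exists_subset_of_mem_open (Set.mem_singleton 1) (h 1)
    refine ⟨𝒰, h𝒰, (Subgroup.eq_bot_iff_forall _).mpr fun k hk => ?_⟩
    refine hsub (setOf_inv_mul_mem_subset le_rfl hg ?_)
    rwa [Set.mem_ofPred_eq, inv_one, one_mul]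
  · rintro ⟨𝒰, h𝒰, hbot⟩ g
    convert (isTopologicalBasis_spanierCosets x₀).isOpen ⟨g, 𝒰, h𝒰, rfl⟩
    ext h
    rw [Set.mem_singleton_iff, Set.mem_ofPred_eq, hbot, Subgroup.mem_bot, inv_mul_eq_one, eq_comm]

end

/-- A path-connected space `X` has discrete fundamental group
`π₁(X,x₀)` in the topology with basic neighborhoods `g·π(𝒰,x₀)` (over all open
covers `𝒰` of `X`) if and only if `X` is semilocally simply connected. -/
theorem discrete_piOne_iff_semilocallySimplyConnected (X : Type*) [TopologicalSpace X]
    [PathConnectedSpace X] (x₀ : X) :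
    @DiscreteTopology (FundamentalGroup X x₀) (piOneTopology X x₀) ↔
      IsSemilocallySimplyConnected X := by
  simp only [discreteTopology_piOneTopology_iff, spanierGroup_eq_bot_iff,
    isSemilocallySimplyConnected_iff_exists_isOpenCover]
end

section
/- Let X be a pointed topological space with base point x₀, and give π₁(X,x₀) the topology with basic open sets B(g,𝒰) = g·π(𝒰,x₀) indexed by open covers 𝒰 of X. Then the closure of the trivial subgroup equals the intersection of π(𝒰,x₀) over all open covers 𝒰 of X. -/
/-!
A point lies in the closure of `{1}` iff every subbasic open set containing it also contains `1`.
The subbasic sets are the cosets `g·π(𝒰,x₀)`, and for a subgroup `H`, every coset of `H`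
through `x` contains `1` exactly when `x ∈ H`.
-/

open TopologicalSpace in
theorem mem_closure_singleton_generateFrom_iff {α : Type*} {g : Set (Set α)} {x y : α} :
    y ∈ @closure α (generateFrom g) {x} ↔ ∀ s ∈ g, y ∈ s → x ∈ s := by
  let := generateFrom g
  rw [← specializes_iff_mem_closure, Specializes, nhds_generateFrom (a := y)]
  simp only [le_iInf_iff, Filter.le_principal_iff, Set.mem_ofPred_eq, and_imp]
  exact forall_congr' fun s => ⟨fun h hs hy => mem_of_mem_nhds (h hy hs),
    fun h hy hs => (isOpen_generateFrom_of_mem hs).mem_nhds (h hs hy)⟩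

theorem Subgroup.forall_inv_mul_mem_imp_inv_mem_iff {G : Type*} [Group G] (H : Subgroup G)
    (x : G) : (∀ g : G, g⁻¹ * x ∈ H → g⁻¹ ∈ H) ↔ x ∈ H := by
  refine ⟨fun h => by simpa using h x (by simp [H.one_mem]), fun hx g hg => ?_⟩
  simpa using H.mul_mem hg (H.inv_mem hx)

/-- In the topology on `π₁(X,x₀)` with basic open sets `g·π(𝒰,x₀)`, the
closure of the trivial subgroup equals the intersection of `π(𝒰,x₀)` over all open
covers `𝒰` of `X`. -/
theorem closure_trivialSubgroup_eq_iInter_spanier (X : Type*) [TopologicalSpace X]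
    (x₀ : X) :
    @closure (FundamentalGroup X x₀) (piOneTopology X x₀)
        ((⊥ : Subgroup (FundamentalGroup X x₀)) : Set (FundamentalGroup X x₀)) =
      ⋂ (𝒰 : Set (Set X)) (_ : IsOpenCover 𝒰),
        (spanierGroup 𝒰 x₀ : Set (FundamentalGroup X x₀)) := by
  ext x
  rw [Subgroup.coe_bot, piOneTopology, mem_closure_singleton_generateFrom_iff]
  simp only [Set.mem_iInter, SetLike.mem_coe]
  constructor
  · intro h 𝒰 h𝒰
    exact ((spanierGroup 𝒰 x₀).forall_inv_mul_mem_imp_inv_mem_iff x).mp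
      fun g hg => by simpa using h _ ⟨g, 𝒰, h𝒰, rfl⟩ hg
  · rintro h _ ⟨g, 𝒰, h𝒰, rfl⟩ hg
    simpa using ((spanierGroup 𝒰 x₀).forall_inv_mul_mem_imp_inv_mem_iff x).mpr (h 𝒰 h𝒰) g hg
end

section
/- Let G ⊆ H be subgroups of π₁(X,x₀) with G normal in π₁(X,x₀), and suppose H/G is countable and X is (H,G)-homotopically Hausdorff. Then the natural map X̂_G → X̂_H (endpoint-respecting projections of path classes, with the Spanier whisker topology) has the uniqueness of path lifts property. -/
/-- Paths in `X` originating at `x₀`, recorded together with their endpoint. -/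
abbrev PathFrom (X : Type*) [TopologicalSpace X] (x₀ : X) := Σ x : X, Path x₀ x

/-- The relation `α ∼_H β`: same endpoint and `[α * β⁻¹] ∈ H`. -/
def relH {X : Type*} [TopologicalSpace X] {x₀ : X} (H : Subgroup (FundamentalGroup X x₀))
    (a b : PathFrom X x₀) : Prop :=
  ∃ h : a.1 = b.1, loopCls (a.2.trans (b.2.cast rfl h).symm) ∈ H

/-- The set `X̃_H` of `∼_H`-classes of paths in `X` originating at `x₀`. -/
def PathSpace {X : Type*} [TopologicalSpace X] {x₀ : X}
    (H : Subgroup (FundamentalGroup X x₀)) : Type _ :=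
  Quot (relH H)

/-- The class of a path in `X̃_H`. -/
def PathSpace.mk {X : Type*} [TopologicalSpace X] {x₀ : X}
    (H : Subgroup (FundamentalGroup X x₀)) (a : PathFrom X x₀) : PathSpace H :=
  Quot.mk _ a

/-- The base point of `X̃_H`: the class of the constant path at `x₀`. -/
def PathSpace.base {X : Type*} [TopologicalSpace X] {x₀ : X}
    (H : Subgroup (FundamentalGroup X x₀)) : PathSpace H :=
  PathSpace.mk H ⟨x₀, Path.refl x₀⟩

/-- The endpoint projection `X̃_H → X`. -/
def endpointProj {X : Type*} [TopologicalSpace X] {x₀ : X}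
    (H : Subgroup (FundamentalGroup X x₀)) : PathSpace H → X :=
  Quot.lift (fun a => a.1) (fun _ _ hab => hab.choose)

/-- The basic set `B_H([α]_H, U)` of the Spanier whisker topology on `X̂_H`. -/
def whiskerBasic {X : Type*} [TopologicalSpace X] {x₀ : X}
    (H : Subgroup (FundamentalGroup X x₀)) (a : PathFrom X x₀) (U : Set X) :
    Set (PathSpace H) :=
  {q | ∃ (b : PathFrom X x₀) (γ : Path a.1 b.1), Set.range γ ⊆ U ∧
    relH H b ⟨b.1, a.2.trans γ⟩ ∧ q = PathSpace.mk H b}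

/-- The Spanier whisker topology on `X̂_H`. -/
def whiskerTopology {X : Type*} [TopologicalSpace X] {x₀ : X}
    (H : Subgroup (FundamentalGroup X x₀)) : TopologicalSpace (PathSpace H) :=
  TopologicalSpace.generateFrom
    {S | ∃ (a : PathFrom X x₀) (U : Set X), IsOpen U ∧ a.1 ∈ U ∧ S = whiskerBasic H a U}

/-- The natural projection `X̂_G → X̂_H` for `G ≤ H`. -/
def pathSpaceProj {X : Type*} [TopologicalSpace X] {x₀ : X}
    {G H : Subgroup (FundamentalGroup X x₀)} (hGH : G ≤ H) :
    PathSpace G → PathSpace H :=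
  Quot.lift (PathSpace.mk H)
    (fun _ _ hab => Quot.sound ⟨hab.choose, hGH hab.choose_spec⟩)

/-- `X` is `(H,G)`-homotopically Hausdorff: for every `h ∈ H ∖ G` and every path `α`
from `x₀`, there is an open neighborhood `U` of `α(1)` such that no element of `G·h`
equals `[α * γ * α⁻¹]` for a loop `γ` in `U` at `α(1)`. -/
def HomotopicallyHausdorffRel {X : Type*} [TopologicalSpace X] (x₀ : X)
    (H G : Subgroup (FundamentalGroup X x₀)) : Prop :=
  ∀ h ∈ H, h ∉ G → ∀ (x : X) (α : Path x₀ x), ∃ U : Set X, IsOpen U ∧ x ∈ U ∧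
    ∀ γ : Path x x, Set.range γ ⊆ U → ∀ g ∈ G,
      g * h ≠ loopCls ((α.trans γ).trans α.symm)

/-! Choose representatives `a t`, `b t` of two lifts `α t`, `β t` with the same image in `X̂_H`.
The class `[a t * (b t)⁻¹]` lies in `H`, and its image `f t` in `π₁(X, x₀) ⧸ G` ranges over the
countable set `H ⧸ G`. Near `t` both lifts move inside whisker neighbourhoods, so by normality
of `G` the value `f s` differs from `f t` by the class of a small loop at `b t (1)` conjugated by
`b t`; `(H, G)`-homotopic Hausdorffness therefore makes every fibre of `f` closed. By
Sierpiński's theorem a compact, connected, locally connected Hausdorff space is not a countable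
union of at least two disjoint nonempty closed sets, so `f` is constant, equal to `f 0 = 1`,
which says `α t = β t`. -/

section PathSpaces
open Topology
variable {X : Type*} [TopologicalSpace X] {x₀ : X}
attribute [local instance] whiskerTopology

theorem loopCls_eq_mk {x : X} (γ : Path x x) : loopCls γ = Path.Homotopic.Quotient.mk γ := rfl

theorem loopCls_inv {x : X} (γ : Path x x) : (loopCls γ)⁻¹ = loopCls γ.symm := rfl

noncomputable def loopDiff (a b : PathFrom X x₀) (e : a.1 = b.1) : FundamentalGroup X x₀ :=
  loopCls (a.2.trans (b.2.cast rfl e).symm)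

section LoopDiff
open Path.Homotopic.Quotient

theorem loopDiff_self (a : PathFrom X x₀) : loopDiff a a rfl = 1 := by
  simp only [loopDiff, loopCls_eq_mk, FundamentalGroup.one_def, Path.cast_rfl_rfl,
    mk_trans, mk_symm]
  grind

theorem loopDiff_symm {a b : PathFrom X x₀} (e : a.1 = b.1) :
    loopDiff b a e.symm = (loopDiff a b e)⁻¹ := by
  obtain ⟨x, a⟩ := a
  obtain ⟨y, b⟩ := b
  cases e
  simp only [loopDiff, loopCls_inv, Path.cast_rfl_rfl, Path.trans_symm, Path.symm_symm]

-- In `FundamentalGroup`, `loopCls γ * loopCls δ = loopCls (δ.trans γ)`.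
theorem loopDiff_trans {a b c : PathFrom X x₀} (e₁ : a.1 = b.1) (e₂ : b.1 = c.1) :
    loopDiff a c (e₁.trans e₂) = loopDiff b c e₂ * loopDiff a b e₁ := by
  obtain ⟨x, a⟩ := a
  obtain ⟨y, b⟩ := b
  obtain ⟨z, c⟩ := c
  cases e₁; cases e₂
  simp only [loopDiff, loopCls_eq_mk, FundamentalGroup.mul_def, Path.cast_rfl_rfl,
    mk_trans, mk_symm]
  grind

theorem loopDiff_whisker {a b : PathFrom X x₀} (e : a.1 = b.1) {y z : X} (γ : Path a.1 y)
    (δ : Path b.1 z) (e' : y = z) :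
    loopDiff ⟨y, a.2.trans γ⟩ ⟨z, b.2.trans δ⟩ e' =
      loopCls ((b.2.trans ((γ.cast e.symm rfl).trans (δ.cast rfl e').symm)).trans b.2.symm) *
        loopDiff a b e := by
  obtain ⟨x, a⟩ := a
  obtain ⟨x', b⟩ := b
  cases e; cases e'
  simp only [loopDiff, loopCls_eq_mk, FundamentalGroup.mul_def, Path.cast_rfl_rfl, Path.trans_symm,
    mk_trans, mk_symm]
  grind

theorem loopDiff_trans_refl (a : PathFrom X x₀) :
    loopDiff a ⟨a.1, a.2.trans (Path.refl a.1)⟩ rfl = 1 := by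
  simp only [loopDiff, loopCls_eq_mk, FundamentalGroup.one_def, Path.cast_rfl_rfl,
    mk_trans, mk_symm, mk_refl]
  grind

end LoopDiff

theorem relH_equivalence (K : Subgroup (FundamentalGroup X x₀)) : Equivalence (relH K) where
  refl a := ⟨rfl, show loopDiff a a rfl ∈ K by rw [loopDiff_self]; exact K.one_mem⟩
  symm := fun {a b} ⟨e, h⟩ =>
    ⟨e.symm, show loopDiff b a e.symm ∈ K by rw [loopDiff_symm e]; exact K.inv_mem h⟩
  trans := fun {a _ c} ⟨e₁, h₁⟩ ⟨e₂, h₂⟩ =>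
    ⟨e₁.trans e₂, show loopDiff a c _ ∈ K by rw [loopDiff_trans e₁ e₂]; exact K.mul_mem h₂ h₁⟩

variable {K : Subgroup (FundamentalGroup X x₀)}

theorem PathSpace.mk_eq_iff {a b : PathFrom X x₀} :
    PathSpace.mk K a = PathSpace.mk K b ↔ relH K a b :=
  ⟨fun h => (relH_equivalence K).eqvGen_iff.mp (Quot.eqvGen_exact h), Quot.sound⟩

theorem PathSpace.mk_surjective : Function.Surjective (PathSpace.mk K) :=
  Quot.exists_rep

theorem pathSpaceProj_mk {G H : Subgroup (FundamentalGroup X x₀)} (hGH : G ≤ H)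
    (a : PathFrom X x₀) : pathSpaceProj hGH (PathSpace.mk G a) = PathSpace.mk H a :=
  rfl

theorem mk_mem_whiskerBasic_self {a : PathFrom X x₀} {U : Set X} (hU : a.1 ∈ U) :
    PathSpace.mk K a ∈ whiskerBasic K a U := by
  refine ⟨a, Path.refl a.1, ?_, ⟨rfl, ?_⟩, rfl⟩
  · simpa [Path.refl_range] using hU
  · show loopDiff a ⟨a.1, a.2.trans (Path.refl a.1)⟩ rfl ∈ K
    rw [loopDiff_trans_refl]
    exact K.one_mem

theorem isOpen_whiskerBasic {a : PathFrom X x₀} {U : Set X} (hU : IsOpen U) (haU : a.1 ∈ U) :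
    IsOpen (whiskerBasic K a U) :=
  TopologicalSpace.isOpen_generateFrom_of_mem ⟨a, U, hU, haU, rfl⟩

theorem eventually_mem_whiskerBasic {Y : Type*} [TopologicalSpace Y] (α : C(Y, PathSpace K))
    {t : Y} {a : PathFrom X x₀} (ha : PathSpace.mk K a = α t) {U : Set X} (hU : IsOpen U)
    (haU : a.1 ∈ U) : ∀ᶠ s in 𝓝 t, α s ∈ whiskerBasic K a U :=
  α.continuous.continuousAt.preimage_mem_nhds
    ((isOpen_whiskerBasic hU haU).mem_nhds (ha ▸ mk_mem_whiskerBasic_self haU))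

section NormalSubgroup
variable {G : Subgroup (FundamentalGroup X x₀)} [G.Normal]

theorem mk_loopDiff_eq_of_mk_eq {a b a' b' : PathFrom X x₀}
    (ha : PathSpace.mk G a = PathSpace.mk G a') (hb : PathSpace.mk G b = PathSpace.mk G b')
    (e : a.1 = b.1) (e' : a'.1 = b'.1) :
    (loopDiff a b e : FundamentalGroup X x₀ ⧸ G) = loopDiff a' b' e' := by
  obtain ⟨ea, hea⟩ := PathSpace.mk_eq_iff.mp ha
  obtain ⟨eb, heb⟩ := PathSpace.mk_eq_iff.mp hb
  have hA : (loopDiff a a' ea : FundamentalGroup X x₀ ⧸ G) = 1 :=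
    (QuotientGroup.eq_one_iff _).mpr hea
  have hB : (loopDiff b b' eb : FundamentalGroup X x₀ ⧸ G) = 1 :=
    (QuotientGroup.eq_one_iff _).mpr heb
  rw [show e' = ea.symm.trans (e.trans eb) from rfl, loopDiff_trans ea.symm (e.trans eb),
    loopDiff_trans e eb, loopDiff_symm ea]
  simp only [QuotientGroup.mk_mul, QuotientGroup.mk_inv, hA, hB, one_mul, inv_one, mul_one]

theorem mk_loopDiff_eq_of_mem_whiskerBasic {a b a' b' : PathFrom X x₀} {U : Set X}
    (e : a.1 = b.1) (e' : a'.1 = b'.1)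
    (ha : PathSpace.mk G a' ∈ whiskerBasic G a U) (hb : PathSpace.mk G b' ∈ whiskerBasic G b U) :
    ∃ w : Path b.1 b.1, Set.range w ⊆ U ∧
      (loopDiff a' b' e' : FundamentalGroup X x₀ ⧸ G) =
        loopCls ((b.2.trans w).trans b.2.symm) * (loopDiff a b e : FundamentalGroup X x₀ ⧸ G) := by
  obtain ⟨a'', γ, hγU, hγ, ha''⟩ := ha
  obtain ⟨b'', δ, hδU, hδ, hb''⟩ := hb
  have e'' : a''.1 = b''.1 :=
    (PathSpace.mk_eq_iff.mp ha'').1.symm.trans (e'.trans (PathSpace.mk_eq_iff.mp hb'').1)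
  refine ⟨(γ.cast e.symm rfl).trans (δ.cast rfl e'').symm, ?_, ?_⟩
  · rw [Path.trans_range, Path.symm_range]
    exact Set.union_subset (by rwa [Path.cast_coe]) (by rwa [Path.cast_coe])
  · rw [mk_loopDiff_eq_of_mk_eq (ha''.trans (Quot.sound hγ)) (hb''.trans (Quot.sound hδ)) e' e'',
      loopDiff_whisker e γ δ e'', QuotientGroup.mk_mul]

theorem HomotopicallyHausdorffRel.exists_isOpen_mk_loopCls_ne
    {H : Subgroup (FundamentalGroup X x₀)} (hHH : HomotopicallyHausdorffRel x₀ H G)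
    {h : FundamentalGroup X x₀} (hH : h ∈ H) (hG : (h : FundamentalGroup X x₀ ⧸ G) ≠ 1)
    {x : X} (α : Path x₀ x) :
    ∃ U : Set X, IsOpen U ∧ x ∈ U ∧ ∀ γ : Path x x, Set.range γ ⊆ U →
      (loopCls ((α.trans γ).trans α.symm) : FundamentalGroup X x₀ ⧸ G) ≠ h := by
  obtain ⟨U, hU, hxU, hγ⟩ := hHH h hH (mt (QuotientGroup.eq_one_iff h).mpr hG) x α
  exact ⟨U, hU, hxU, fun γ hγU heq =>
    hγ γ hγU _ (QuotientGroup.eq_iff_div_mem.mp heq) (div_mul_cancel _ _)⟩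

theorem isClosed_setOf_mk_loopDiff_eq {H : Subgroup (FundamentalGroup X x₀)}
    (hHH : HomotopicallyHausdorffRel x₀ H G) {Y : Type*} [TopologicalSpace Y]
    (α β : C(Y, PathSpace G)) {a b : Y → PathFrom X x₀}
    (ha : ∀ y, PathSpace.mk G (a y) = α y) (hb : ∀ y, PathSpace.mk G (b y) = β y)
    (e : ∀ y, (a y).1 = (b y).1) (hH : ∀ y, loopDiff (a y) (b y) (e y) ∈ H)
    {k : FundamentalGroup X x₀} (hk : k ∈ H) :
    IsClosed {y | (loopDiff (a y) (b y) (e y) : FundamentalGroup X x₀ ⧸ G) = k} := by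
  refine isOpen_compl_iff.mp (isOpen_iff_eventually.mpr fun t ht => ?_)
  have hne : ((k * (loopDiff (a t) (b t) (e t))⁻¹ : FundamentalGroup X x₀) :
      FundamentalGroup X x₀ ⧸ G) ≠ 1 := by
    rw [QuotientGroup.mk_mul, QuotientGroup.mk_inv, Ne, mul_inv_eq_one]
    exact fun h => ht h.symm
  obtain ⟨U, hU, hbU, hUk⟩ :=
    hHH.exists_isOpen_mk_loopCls_ne (H.mul_mem hk (H.inv_mem (hH t))) hne (b t).2
  filter_upwards [eventually_mem_whiskerBasic α (ha t) hU (e t ▸ hbU),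
    eventually_mem_whiskerBasic β (hb t) hU hbU] with s hαs hβs hs
  rw [← ha s] at hαs
  rw [← hb s] at hβs
  obtain ⟨w, hwU, hw⟩ := mk_loopDiff_eq_of_mem_whiskerBasic (e t) (e s) hαs hβs
  refine hUk w hwU ?_
  rw [QuotientGroup.mk_mul, QuotientGroup.mk_inv, ← hs, hw, mul_inv_cancel_right]

end NormalSubgroup

end PathSpaces

theorem countable_image_mk_of_countable_quotient_subgroupOf {Γ : Type*} [Group Γ]
    {G H : Subgroup Γ} [G.Normal] (hcount : Countable (H ⧸ G.subgroupOf H)) :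
    ((↑) '' (H : Set Γ) : Set (Γ ⧸ G)).Countable :=
  (Set.countable_range (QuotientGroup.map (G.subgroupOf H) G H.subtype le_rfl)).mono
    (by rintro _ ⟨h, hh, rfl⟩; exact ⟨QuotientGroup.mk ⟨h, hh⟩, rfl⟩)

section Sierpinski
open Set Topology
variable {Z ι : Type*} [TopologicalSpace Z]

theorem isOpen_setOf_mem_interior_fiber (f : Z → ι) :
    IsOpen {z | z ∈ interior (f ⁻¹' {f z})} := by
  refine isOpen_iff_mem_nhds.mpr fun z hz =>
    Filter.mem_of_superset (isOpen_interior.mem_nhds hz) fun y hy => ?_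
  have hfy : f y = f z := (interior_subset hy : y ∈ f ⁻¹' {f z})
  rwa [← hfy] at hy

theorem IsClosed.exists_nhds_inter_subset_fiber [CompactSpace Z] [T2Space Z] {F : Set Z}
    (hF : IsClosed F) (hne : F.Nonempty) {f : Z → ι} (hc : (range f).Countable)
    (hf : ∀ z, IsClosed (f ⁻¹' {f z})) :
    ∃ z ∈ F, ∃ V ∈ 𝓝 z, ∀ v ∈ V ∩ F, f v = f z := by
  have : CompactSpace F := isCompact_iff_compactSpace.mp hF.isCompact
  have : Nonempty F := hne.to_subtype
  have : Countable (range f) := hc.to_subtype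
  obtain ⟨i, z, hz⟩ := nonempty_interior_of_iUnion_of_closed
    (f := fun i : range f => {z : F | f z = i})
    (fun ⟨_, z, hz⟩ => hz ▸ (hf z).preimage continuous_subtype_val)
    (iUnion_eq_univ_iff.mpr fun z => ⟨⟨f z, mem_range_self _⟩, rfl⟩)
  obtain ⟨V, hV, hVi⟩ := mem_nhds_subtype F z _ |>.mp (mem_interior_iff_mem_nhds.mp hz)
  have hzi : f z = i := (interior_subset hz : z ∈ {z : F | f z = i})
  exact ⟨z, z.2, V, hV, fun v ⟨hvV, hvF⟩ =>
    (hVi (show (⟨v, hvF⟩ : F) ∈ Subtype.val ⁻¹' V from hvV)).trans hzi.symm⟩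

theorem apply_eq_of_countable_range_of_isClosed_fiber [CompactSpace Z] [T2Space Z]
    [PreconnectedSpace Z] [LocallyConnectedSpace Z] {f : Z → ι} (hc : (range f).Countable)
    (hf : ∀ z, IsClosed (f ⁻¹' {f z})) (x y : Z) : f x = f y := by
  set F := {z | z ∈ interior (f ⁻¹' {f z})}ᶜ
  obtain hF | hF := F.eq_empty_or_nonempty
  · refine (IsLocallyConstant.iff_isOpen_fiber_apply.mpr fun x =>
      isOpen_iff_mem_nhds.mpr fun x' hx' => ?_).apply_eq_of_preconnectedSpace x y
    have hx'F : x' ∉ F := hF ▸ notMem_empty x'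
    have hx'x : f x' = f x := hx'
    exact mem_interior_iff_mem_nhds.mp (hx'x ▸ not_not.mp hx'F)
  exfalso
  obtain ⟨z, hzF, V, hV, hVF⟩ :=
    (isOpen_setOf_mem_interior_fiber f).isClosed_compl.exists_nhds_inter_subset_fiber hF hc hf
  have hC : connectedComponentIn V z ∈ 𝓝 z := connectedComponentIn_mem_nhds hV
  obtain ⟨w, hwC, hwz⟩ : ∃ w ∈ connectedComponentIn V z, f w ≠ f z := by
    by_contra! h
    exact hzF (mem_interior_iff_mem_nhds.mpr (Filter.mem_of_superset hC h))
  -- Points of `V` in the fibre of `f w` avoid `F` (on which `f = f z`), so lie in its interior.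
  have hCsub : connectedComponentIn V z ⊆ interior (f ⁻¹' {f w}) ∪ (f ⁻¹' {f w})ᶜ := by
    intro v hv
    by_cases hvw : f v = f w
    · have hvF : v ∉ F := fun hvF =>
        hwz (hvw.symm.trans (hVF v ⟨connectedComponentIn_subset _ _ hv, hvF⟩))
      exact Or.inl (hvw ▸ not_not.mp hvF)
    · exact Or.inr hvw
  rcases isPreconnected_connectedComponentIn.subset_or_subset isOpen_interior (hf w).isOpen_compl
      (disjoint_compl_right.mono_left interior_subset) hCsub with h | h
  · exact hwz (interior_subset (h (mem_connectedComponentIn (mem_of_mem_nhds hV)))).symm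
  · exact h hwC rfl

end Sierpinski

instance : LocallyPathConnectedSpace unitInterval :=
  (convex_Icc (0 : ℝ) 1).locallyPathConnectedSpace

/-- If `G ≤ H` are subgroups of `π₁(X,x₀)` with `G` normal in
`π₁(X,x₀)`, `H/G` countable and `X` `(H,G)`-homotopically Hausdorff, then the
natural map `X̂_G → X̂_H` has the uniqueness of path lifts property. -/
theorem pathSpaceProj_uniqueness_of_path_lifts {X : Type*} [TopologicalSpace X]
    (x₀ : X) (G H : Subgroup (FundamentalGroup X x₀)) (hGH : G ≤ H)
    (hnorm : G.Normal) (hcount : Countable (H ⧸ G.subgroupOf H))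
    (hHH : HomotopicallyHausdorffRel x₀ H G) :
    letI : TopologicalSpace (PathSpace G) := whiskerTopology G
    ∀ α β : C(unitInterval, PathSpace G),
      (∀ t, pathSpaceProj hGH (α t) = pathSpaceProj hGH (β t)) → α 0 = β 0 → α = β := by
  let : TopologicalSpace (PathSpace G) := whiskerTopology G
  intro α β hproj h0
  choose a ha using fun t => PathSpace.mk_surjective (α t)
  choose b hb using fun t => PathSpace.mk_surjective (β t)
  have hH (t) : PathSpace.mk H (a t) = PathSpace.mk H (b t) := by
    rw [← pathSpaceProj_mk hGH, ← pathSpaceProj_mk hGH, ha, hb]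
    exact hproj t
  choose e heH using fun t => PathSpace.mk_eq_iff.mp (hH t)
  let f : unitInterval → FundamentalGroup X x₀ ⧸ G := fun t => loopDiff (a t) (b t) (e t)
  have hrange : (Set.range f).Countable :=
    (countable_image_mk_of_countable_quotient_subgroupOf hcount).mono
      (by rintro _ ⟨t, rfl⟩; exact ⟨_, heH t, rfl⟩)
  have hfibers (t) : IsClosed (f ⁻¹' {f t}) :=
    isClosed_setOf_mk_loopDiff_eq hHH α β ha hb e heH (heH t)
  have hf0 : f 0 = 1 := (QuotientGroup.eq_one_iff _).mpr
    (PathSpace.mk_eq_iff.mp ((ha 0).trans (h0.trans (hb 0).symm))).2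
  refine ContinuousMap.ext fun t => ?_
  rw [← ha t, ← hb t]
  exact PathSpace.mk_eq_iff.mpr ⟨e t, (QuotientGroup.eq_one_iff _).mp
    ((apply_eq_of_countable_range_of_isClosed_fiber hrange hfibers t 0).trans hf0)⟩
end

section
/- Let X be a path-connected space, x₀ ∈ X, and H a subgroup of π₁(X,x₀). The endpoint projection p_H : X̂_H → X has the unique path lifting property if and only if the image of the induced homomorphism π₁(p_H) : π₁(X̂_H, x̂₀) → π₁(X,x₀) is contained in H. -/
/-!
For a path `A` from `x₀` to `y`, a path `γ` from `y` has the standard lift `t ↦ [A · γ|[0,t]]`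
starting at `[A]`; it is continuous for the whisker topology because for `s` near `t` the subpath `γ|[t,s]` stays inside any open set
containing `γ t`. If lifts are unique, a loop of `X̂_H` at `x̂₀` over `δ` is the standard lift of
`δ`, whose endpoint `[δ]` is then `x̂₀`, i.e. `[δ] ∈ H`. Conversely, if loops at `x̂₀` project into
`H`, a lift of `γ` from `[A]` to `[B]`, preceded by the standard lift of `A` and followed by that
of `B⁻¹`, is a loop at `x̂₀` over `A · γ · B⁻¹`; so `[B] = [A · γ]` and every lift is the standard
one.
-/

section

open unitInterval Topology

variable {X : Type*} [TopologicalSpace X] {x₀ y z : X}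

theorem loopCls_congr {p q : Path x₀ x₀} (h : p.Homotopic q) : loopCls p = loopCls q :=
  Path.Homotopic.Quotient.eq.mpr h

@[simp] theorem loopCls_trans_symm_self (A : Path x₀ y) : loopCls (A.trans A.symm) = 1 :=
  loopCls_congr (Path.Homotopic.trans_symm A)

theorem loopCls_trans_symm_mul (A B C : Path x₀ y) :
    loopCls (B.trans C.symm) * loopCls (A.trans B.symm) = loopCls (A.trans C.symm) := by
  rw [FundamentalGroup.mul_def]
  simp only [loopCls, Path.Homotopic.Quotient.mk''_eq_mk, Path.Homotopic.Quotient.mk_trans,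
    Path.Homotopic.Quotient.mk_symm, Path.Homotopic.Quotient.trans_assoc]
  grind

theorem inv_loopCls_trans_symm (A B : Path x₀ y) :
    (loopCls (A.trans B.symm))⁻¹ = loopCls (B.trans A.symm) :=
  inv_eq_of_mul_eq_one_left (by rw [loopCls_trans_symm_mul, loopCls_trans_symm_self])

theorem loopCls_trans_trans_symm_trans {w : X} (P Q : Path x₀ y) (R : Path y w) :
    loopCls ((P.trans R).trans (Q.trans R).symm) = loopCls (P.trans Q.symm) := by
  simp only [loopCls, Path.trans_symm, Path.Homotopic.Quotient.mk''_eq_mk,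
    Path.Homotopic.Quotient.mk_trans, Path.Homotopic.Quotient.mk_symm,
    Path.Homotopic.Quotient.trans_assoc]
  grind

theorem Path.comp_trans_apply {Y : Type*} [TopologicalSpace Y] {f : X → Y} {a b c : X}
    {a' b' c' : Y} {Γ : Path a b} {Γ' : Path b c} {γ : Path a' b'} {γ' : Path b' c'}
    (h : ∀ t, f (Γ t) = γ t) (h' : ∀ t, f (Γ' t) = γ' t) (t : I) :
    f ((Γ.trans Γ') t) = (γ.trans γ') t := by
  simp only [Path.trans_apply]
  split_ifs <;> simp [h, h']

theorem Path.eventually_range_subpath_subset {a b : X} (γ : Path a b) {U : Set X}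
    (hU : IsOpen U) {t : I} (ht : γ t ∈ U) : ∀ᶠ s in 𝓝 t, Set.range (γ.subpath t s) ⊆ U := by
  have hcont : Continuous fun p : I × I => γ.subpath t p.1 p.2 :=
    γ.subpath_continuous_family.comp (continuous_const.prodMk continuous_id)
  have := isCompact_univ.eventually_forall_of_forall_eventually (x₀ := t)
    (P := fun s r => γ.subpath t s r ∈ U) fun r _ =>
      (hU.preimage hcont).mem_nhds (by simpa using ht)
  filter_upwards [this] with s hs
  rintro _ ⟨r, rfl⟩
  exact hs r trivial

namespace PathSpace

variable {H : Subgroup (FundamentalGroup X x₀)}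

theorem relH_equivalence : Equivalence (relH H) where
  refl := by
    rintro ⟨y, A⟩
    exact ⟨rfl, by rw [Path.cast_rfl_rfl, loopCls_trans_symm_self]; exact H.one_mem⟩
  symm := by
    rintro ⟨y, A⟩ ⟨_, B⟩ ⟨⟨⟩, h⟩
    exact ⟨rfl, inv_loopCls_trans_symm A B ▸ inv_mem h⟩
  trans := by
    rintro ⟨y, A⟩ ⟨_, B⟩ ⟨_, C⟩ ⟨⟨⟩, h₁⟩ ⟨⟨⟩, h₂⟩
    exact ⟨rfl, loopCls_trans_symm_mul A B C ▸ mul_mem h₂ h₁⟩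

theorem mk_eq_mk_iff_relH {a b : PathFrom X x₀} : mk H a = mk H b ↔ relH H a b :=
  relH_equivalence.quot_mk_eq_iff a b

theorem mk_eq_mk_iff {A B : Path x₀ y} :
    mk H ⟨y, A⟩ = mk H ⟨y, B⟩ ↔ loopCls (A.trans B.symm) ∈ H :=
  mk_eq_mk_iff_relH.trans ⟨fun ⟨_, h⟩ => h, fun h => ⟨rfl, h⟩⟩

theorem mk_eq_mk_of_homotopic {A B : Path x₀ y} (h : A.Homotopic B) :
    mk H ⟨y, A⟩ = mk H ⟨y, B⟩ :=
  mk_eq_mk_iff.mpr <| by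
    rw [loopCls_congr (h.hcomp (Path.Homotopic.refl B.symm)), loopCls_trans_symm_self]
    exact one_mem H

theorem mk_cast (A : Path x₀ y) {y' : X} (h : y' = y) :
    mk H ⟨y', A.cast rfl h⟩ = mk H ⟨y, A⟩ := by
  subst h; rfl

theorem mk_eq_base_iff (δ : Path x₀ x₀) : mk H ⟨x₀, δ⟩ = base H ↔ loopCls δ ∈ H := by
  rw [base, mk_eq_mk_iff, Path.refl_symm, loopCls_congr (Path.Homotopic.trans_refl δ)]

attribute [local instance] whiskerTopology

theorem continuous_endpointProj : Continuous (endpointProj H) := by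
  refine continuous_def.mpr fun U hU => ?_
  have : endpointProj H ⁻¹' U = ⋃ a ∈ {a : PathFrom X x₀ | a.1 ∈ U}, whiskerBasic H a U := by
    ext q
    simp only [Set.mem_preimage, Set.mem_iUnion]
    constructor
    · obtain ⟨a, rfl⟩ := Quot.exists_rep q
      exact fun ha : a.1 ∈ U => ⟨a, ha, a, Path.refl a.1, by simpa using ha,
        mk_eq_mk_iff_relH.mp (mk_eq_mk_of_homotopic (Path.Homotopic.trans_refl a.2).symm), rfl⟩
    · rintro ⟨a, -, b, γ, hγU, -, rfl⟩
      exact hγU ⟨1, γ.target⟩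
  rw [this]
  exact isOpen_biUnion fun a ha => .basic _ ⟨a, U, hU, ha, rfl⟩

theorem continuous_mk_trans_subpath (γ : Path y z) (A : Path x₀ (γ 0)) :
    Continuous fun t => mk H ⟨γ t, A.trans (γ.subpath 0 t)⟩ := by
  rw [whiskerTopology, continuous_generateFrom_iff]
  rintro _ ⟨a, U, hU, -, rfl⟩
  refine isOpen_iff_mem_nhds.mpr ?_
  rintro t ⟨⟨_, B⟩, γ', hγ'U, ⟨⟨⟩, hB⟩, hmk⟩
  obtain ⟨⟨⟩, hAB⟩ := mk_eq_mk_iff_relH.mp hmk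
  filter_upwards [γ.eventually_range_subpath_subset hU (hγ'U ⟨1, γ'.target⟩)] with s hs
  refine ⟨⟨γ s, A.trans (γ.subpath 0 s)⟩, γ'.trans (γ.subpath t s), ?_, ⟨rfl, ?_⟩, rfl⟩
  · rw [Path.trans_range]
    exact Set.union_subset hγ'U hs
  have hsplit : (A.trans (γ.subpath 0 s)).Homotopic
      ((A.trans (γ.subpath 0 t)).trans (γ.subpath t s)) :=
    ((Path.Homotopic.refl A).hcomp ⟨(Path.Homotopy.subpathTransSubpath γ 0 t s).symm⟩).trans
      (Path.Homotopic.trans_assoc _ _ _).symm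
  have hsplit' : (a.2.trans (γ'.trans (γ.subpath t s))).Homotopic
      ((a.2.trans γ').trans (γ.subpath t s)) :=
    (Path.Homotopic.trans_assoc _ _ _).symm
  rw [Path.cast_rfl_rfl, loopCls_congr (hsplit.hcomp hsplit'.symm₂),
    loopCls_trans_trans_symm_trans, ← loopCls_trans_symm_mul _ B]
  exact mul_mem hB hAB

variable (H) in
noncomputable def liftPath (A : Path x₀ y) (γ : Path y z) :
    Path (mk H ⟨y, A⟩) (mk H ⟨z, A.trans γ⟩) where
  toFun t := mk H ⟨γ t, (A.cast rfl γ.source).trans (γ.subpath 0 t)⟩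
  continuous_toFun := continuous_mk_trans_subpath γ _
  source' := by
    simp only [Path.subpath_self]
    rw [mk_eq_mk_of_homotopic (Path.Homotopic.trans_refl _), mk_cast]
  target' := by
    simp only [Path.subpath_zero_one]
    rw [← Path.cast_trans, mk_cast]

theorem exists_lift (α : C(I, X)) (q : PathSpace H) (hq : endpointProj H q = α 0) :
    ∃ β : C(I, PathSpace H), β 0 = q ∧ ∀ t, endpointProj H (β t) = α t := by
  obtain ⟨⟨y, A⟩, rfl⟩ := Quot.exists_rep q
  exact ⟨(liftPath H A ((⟨α, rfl, rfl⟩ : Path (α 0) (α 1)).cast hq rfl)).toContinuousMap,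
    Path.source _, fun _ => rfl⟩

variable (H) in
/-- A loop of `X̂_H` at `x̂₀` over `δ` is a class in `π₁(X̂_H, x̂₀)` with image `[δ]` under `p_H`,
so this is `p_H#π₁(X̂_H, x̂₀) ≤ H` stated without the fundamental group of `X̂_H`. -/
def ImagePiOneLE : Prop :=
  ∀ (γ : C(I, PathSpace H)) (δ : Path x₀ x₀), γ 0 = base H → γ 1 = base H →
    (∀ t, endpointProj H (γ t) = δ t) → loopCls δ ∈ H

theorem imagePiOneLE_of_lift_unique
    (huniq : ∀ β₁ β₂ : C(I, PathSpace H),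
      (∀ t, endpointProj H (β₁ t) = endpointProj H (β₂ t)) → β₁ 0 = β₂ 0 → β₁ = β₂) :
    ImagePiOneLE H := by
  intro γ δ hγ0 hγ1 hγ
  have hγL : γ = (liftPath H (Path.refl x₀) δ).toContinuousMap :=
    huniq _ _ hγ (hγ0.trans (liftPath H _ _).source.symm)
  rw [← mk_eq_base_iff, ← mk_eq_mk_of_homotopic (Path.Homotopic.refl_trans δ), ← hγ1, hγL]
  exact (liftPath H _ _).target.symm

namespace ImagePiOneLE

theorem eq_mk_trans (hH : ImagePiOneLE H) {A : Path x₀ y} {q : PathSpace H}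
    (Γ : Path (mk H ⟨y, A⟩) q) (γ : Path y z) (hΓ : ∀ t, endpointProj H (Γ t) = γ t) :
    q = mk H ⟨z, A.trans γ⟩ := by
  obtain ⟨⟨w, B⟩, rfl⟩ := Quot.exists_rep q
  obtain rfl : w = z := by rw [← γ.target, ← hΓ 1, Γ.target]; rfl
  have hstart : mk H ⟨y, A⟩ = mk H ⟨y, (Path.refl x₀).trans A⟩ :=
    mk_eq_mk_of_homotopic (Path.Homotopic.refl_trans A).symm
  have hend : mk H ⟨x₀, B.trans B.symm⟩ = base H :=
    (mk_eq_base_iff _).mpr (by rw [loopCls_trans_symm_self]; exact H.one_mem)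
  let Λ : Path (base H) (base H) := ((liftPath H (Path.refl x₀) A).cast rfl hstart).trans
    (Γ.trans ((liftPath H B B.symm).cast rfl hend.symm))
  have hmem := hH Λ (A.trans (γ.trans B.symm)) Λ.source Λ.target
    (Path.comp_trans_apply (fun _ => rfl) (Path.comp_trans_apply hΓ fun _ => rfl))
  rw [← loopCls_congr (Path.Homotopic.trans_assoc A γ B.symm), ← inv_loopCls_trans_symm] at hmem
  exact mk_eq_mk_iff.mpr (inv_mem_iff.mp hmem)

theorem eq_liftPath (hH : ImagePiOneLE H) {β : C(I, PathSpace H)} {A : Path x₀ y}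
    {γ : Path y z} (hβ0 : β 0 = mk H ⟨y, A⟩) (hβ : ∀ t, endpointProj H (β t) = γ t) (t : I) :
    β t = liftPath H A γ t :=
  hH.eq_mk_trans (((⟨β, rfl, rfl⟩ : Path (β 0) (β 1)).subpath 0 t).cast hβ0.symm rfl)
    ((γ.subpath 0 t).cast γ.source.symm rfl) fun _ => hβ _

theorem lift_unique (hH : ImagePiOneLE H) (β₁ β₂ : C(I, PathSpace H))
    (hproj : ∀ t, endpointProj H (β₁ t) = endpointProj H (β₂ t)) (h0 : β₁ 0 = β₂ 0) :
    β₁ = β₂ := by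
  obtain ⟨⟨y, A⟩, hA⟩ := Quot.exists_rep (β₁ 0)
  let γ : Path y (endpointProj H (β₁ 1)) :=
    ((⟨β₁, rfl, rfl⟩ : Path (β₁ 0) (β₁ 1)).map continuous_endpointProj).cast
      (congrArg (endpointProj H) hA) rfl
  ext t
  rw [hH.eq_liftPath hA.symm (γ := γ) (fun _ => rfl) t,
    hH.eq_liftPath (h0 ▸ hA.symm) (γ := γ) (fun s => (hproj s).symm) t]

end ImagePiOneLE

end PathSpace

end

theorem endpointProj_uplp_iff_image_piOne_le_general {X : Type*} [TopologicalSpace X]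
    (x₀ : X) (H : Subgroup (FundamentalGroup X x₀)) :
    letI : TopologicalSpace (PathSpace H) := whiskerTopology H
    ((∀ (α : C(unitInterval, X)) (q : PathSpace H), endpointProj H q = α 0 →
        ∃ β : C(unitInterval, PathSpace H), β 0 = q ∧ ∀ t, endpointProj H (β t) = α t) ∧
      (∀ β₁ β₂ : C(unitInterval, PathSpace H),
        (∀ t, endpointProj H (β₁ t) = endpointProj H (β₂ t)) → β₁ 0 = β₂ 0 → β₁ = β₂)) ↔
    (∀ (γ : C(unitInterval, PathSpace H)) (δ : Path x₀ x₀),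
      γ 0 = PathSpace.base H → γ 1 = PathSpace.base H →
      (∀ t, endpointProj H (γ t) = δ t) → loopCls δ ∈ H) :=
  ⟨fun ⟨_, huniq⟩ => PathSpace.imagePiOneLE_of_lift_unique huniq,
    fun hH => ⟨PathSpace.exists_lift, PathSpace.ImagePiOneLE.lift_unique hH⟩⟩

/-- For a path-connected space `X`, `x₀ ∈ X` and a subgroup `H` of
`π₁(X,x₀)`, the endpoint projection `p_H : X̂_H → X` has the unique path lifting
property if and only if the image of `π₁(p_H) : π₁(X̂_H, x̂₀) → π₁(X,x₀)` is contained
in `H`. -/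
theorem endpointProj_uplp_iff_image_piOne_le {X : Type*} [TopologicalSpace X]
    [PathConnectedSpace X] (x₀ : X) (H : Subgroup (FundamentalGroup X x₀)) :
    letI : TopologicalSpace (PathSpace H) := whiskerTopology H
    ((∀ (α : C(unitInterval, X)) (q : PathSpace H), endpointProj H q = α 0 →
        ∃ β : C(unitInterval, PathSpace H), β 0 = q ∧ ∀ t, endpointProj H (β t) = α t) ∧
      (∀ β₁ β₂ : C(unitInterval, PathSpace H),
        (∀ t, endpointProj H (β₁ t) = endpointProj H (β₂ t)) → β₁ 0 = β₂ 0 → β₁ = β₂)) ↔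
    (∀ (γ : C(unitInterval, PathSpace H)) (δ : Path x₀ x₀),
      γ 0 = PathSpace.base H → γ 1 = PathSpace.base H →
      (∀ t, endpointProj H (γ t) = δ t) → loopCls δ ∈ H) :=
  endpointProj_uplp_iff_image_piOne_le_general x₀ H
end
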